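/- Let u ∈ C²(ℝ³) solve Δu = W'(u) with u_z > 0 and ½|∇u|² = W(u), for smooth W : ℝ → [0,∞). Suppose the quotients u_x/u_z and u_y/u_z depend only on z, say u_x/u_z = a(z) and u_y/u_z = b(z) with a, b never zero. Then a and b are constant functions, and u(x,y,z) = h(ax + by + z) for a function h : ℝ → ℝ satisfying h''(t) = W'(h(t))/(a² + b² + 1). -/

import Mathlib

noncomputable def pd {n : ℕ} (i : Fin n) (f : (Fin n → ℝ) → ℝ) (x : Fin n → ℝ) : ℝ :=
  fderiv ℝ f x (Pi.single i 1)

noncomputable def lap {n : ℕ} (f : (Fin n → ℝ) → ℝ) (x : Fin n → ℝ) : ℝ :=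
  ∑ j, pd j (pd j f) x

lemma contDiff_pd {n : ℕ} {f : (Fin n → ℝ) → ℝ} (hf : ContDiff ℝ (⊤ : ℕ∞) f) (i : Fin n) :
    ContDiff ℝ (⊤ : ℕ∞) (pd i f) := by
  have h1 : ContDiff ℝ (⊤ : ℕ∞) (fderiv ℝ f) := hf.fderiv_right (by simp)
  exact (ContinuousLinearMap.apply ℝ ℝ (Pi.single i 1)).contDiff.comp h1

lemma pd_comm {n : ℕ} {f : (Fin n → ℝ) → ℝ} (hf : ContDiff ℝ (⊤ : ℕ∞) f) (i j : Fin n)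
    (x : Fin n → ℝ) : pd i (pd j f) x = pd j (pd i f) x := by
  have hd : ∀ y, HasFDerivAt f (fderiv ℝ f y) y :=
    fun y => (hf.differentiable (by simp) y).hasFDerivAt
  have h1 : ContDiff ℝ (⊤ : ℕ∞) (fderiv ℝ f) := hf.fderiv_right (by simp)
  have h2 : HasFDerivAt (fderiv ℝ f) (fderiv ℝ (fderiv ℝ f) x) x :=
    (h1.differentiable (by simp) x).hasFDerivAt
  have key : ∀ k l : Fin n, pd k (pd l f) x
      = (fderiv ℝ (fderiv ℝ f) x) (Pi.single k 1) (Pi.single l 1) := by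
    intro k l
    have heq : pd l f = ⇑(ContinuousLinearMap.apply ℝ ℝ (Pi.single l 1)) ∘ fderiv ℝ f := rfl
    have h3 : HasFDerivAt (⇑(ContinuousLinearMap.apply ℝ ℝ (Pi.single l 1)) ∘ fderiv ℝ f)
        ((ContinuousLinearMap.apply ℝ ℝ (Pi.single l 1)).comp (fderiv ℝ (fderiv ℝ f) x)) x :=
      (ContinuousLinearMap.apply ℝ ℝ (Pi.single l 1)).hasFDerivAt.comp x h2
    show fderiv ℝ (pd l f) x (Pi.single k 1) = _
    rw [heq, h3.fderiv]
    rfl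
  rw [key i j, key j i]
  exact second_derivative_symmetric hd h2 _ _

lemma pd_mul {n : ℕ} {f g : (Fin n → ℝ) → ℝ} {x : Fin n → ℝ}
    (hf : DifferentiableAt ℝ f x) (hg : DifferentiableAt ℝ g x) (i : Fin n) :
    pd i (fun y => f y * g y) x = pd i f x * g x + f x * pd i g x := by
  simp only [pd]
  rw [fderiv_fun_mul hf hg]
  simp only [ContinuousLinearMap.add_apply, ContinuousLinearMap.smul_apply, smul_eq_mul]
  ring

lemma pd_add {n : ℕ} {f g : (Fin n → ℝ) → ℝ} {x : Fin n → ℝ}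
    (hf : DifferentiableAt ℝ f x) (hg : DifferentiableAt ℝ g x) (i : Fin n) :
    pd i (fun y => f y + g y) x = pd i f x + pd i g x := by
  simp only [pd]
  rw [fderiv_fun_add hf hg]
  simp

lemma pd_const_mul {n : ℕ} {f : (Fin n → ℝ) → ℝ} {x : Fin n → ℝ} (c : ℝ)
    (hf : DifferentiableAt ℝ f x) (i : Fin n) :
    pd i (fun y => c * f y) x = c * pd i f x := by
  simp only [pd]
  rw [fderiv_const_mul hf]
  simp

lemma pd_sq {n : ℕ} {f : (Fin n → ℝ) → ℝ} {x : Fin n → ℝ}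
    (hf : DifferentiableAt ℝ f x) (i : Fin n) :
    pd i (fun y => f y ^ 2) x = 2 * f x * pd i f x := by
  have : (fun y => f y ^ 2) = fun y => f y * f y := by funext y; ring
  rw [this, pd_mul hf hf]
  ring

lemma pd_comp_outer {g : ℝ → ℝ} {n : ℕ} {f : (Fin n → ℝ) → ℝ} {x : Fin n → ℝ}
    (hg : DifferentiableAt ℝ g (f x)) (hf : DifferentiableAt ℝ f x) (i : Fin n) :
    pd i (fun y => g (f y)) x = deriv g (f x) * pd i f x := by
  simp only [pd]
  have h := (hg.hasDerivAt.comp_hasFDerivAt x hf.hasFDerivAt)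
  rw [show (fun y => g (f y)) = g ∘ f from rfl, h.fderiv]
  simp

lemma pd_proj_comp {g : ℝ → ℝ} (hg : Differentiable ℝ g) (k : Fin 3) (i : Fin 3)
    (x : Fin 3 → ℝ) :
    pd i (fun y => g (y k)) x = deriv g (x k) * (Pi.single i 1 : Fin 3 → ℝ) k := by
  simp only [pd]
  have hp : HasFDerivAt (fun y : Fin 3 → ℝ => y k)
      (ContinuousLinearMap.proj k : (Fin 3 → ℝ) →L[ℝ] ℝ) x :=
    (ContinuousLinearMap.proj k : (Fin 3 → ℝ) →L[ℝ] ℝ).hasFDerivAt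
  have h := (hg (x k)).hasDerivAt.comp_hasFDerivAt x hp
  rw [show (fun y => g (y k)) = g ∘ (fun y : Fin 3 → ℝ => y k) from rfl, h.fderiv]
  simp

lemma clm_apply_three (L : (Fin 3 → ℝ) →L[ℝ] ℝ) (v : Fin 3 → ℝ) :
    L v = v 0 * L (Pi.single 0 1) + v 1 * L (Pi.single 1 1) + v 2 * L (Pi.single 2 1) := by
  have hv : v = v 0 • (Pi.single 0 1 : Fin 3 → ℝ) + v 1 • (Pi.single 1 1 : Fin 3 → ℝ)
      + v 2 • (Pi.single 2 1 : Fin 3 → ℝ) := by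
    funext j
    fin_cases j <;> simp [Pi.single_apply]
  conv_lhs => rw [hv]
  simp [map_add, map_smul]

/-- Coordinates: `0 = x`, `1 = y`, `2 = z`. -/
theorem stmt_7 (W : ℝ → ℝ) (hW : ContDiff ℝ (⊤ : ℕ∞) W) (hWnonneg : ∀ t, 0 ≤ W t)
    (u : (Fin 3 → ℝ) → ℝ) (hu : ContDiff ℝ (⊤ : ℕ∞) u)
    (hAC : ∀ x, lap u x = deriv W (u x))
    (hmono : ∀ x, 0 < pd 2 u x)
    (hequi : ∀ x, (1 / 2) * ∑ j, (pd j u x) ^ 2 = W (u x))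
    (a b : ℝ → ℝ) (ha : ContDiff ℝ (⊤ : ℕ∞) a) (hb : ContDiff ℝ (⊤ : ℕ∞) b)
    (ha0 : ∀ z, a z ≠ 0) (hb0 : ∀ z, b z ≠ 0)
    (hqa : ∀ x, pd 0 u x / pd 2 u x = a (x 2))
    (hqb : ∀ x, pd 1 u x / pd 2 u x = b (x 2)) :
    ∃ (a₀ b₀ : ℝ) (h : ℝ → ℝ),
      (∀ z, a z = a₀) ∧ (∀ z, b z = b₀) ∧
      (∀ x, u x = h (a₀ * x 0 + b₀ * x 1 + x 2)) ∧
      (∀ t, deriv (deriv h) t = deriv W (h t) / (a₀ ^ 2 + b₀ ^ 2 + 1)) := by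
  have hud : Differentiable ℝ u := hu.differentiable (by simp)
  have hpdC : ∀ i : Fin 3, ContDiff ℝ (⊤ : ℕ∞) (pd i u) := contDiff_pd hu
  have hpdd : ∀ (i : Fin 3) (x : Fin 3 → ℝ), DifferentiableAt ℝ (pd i u) x :=
    fun i x => (hpdC i).differentiable (by simp) x
  have hu0 : ∀ x, pd 0 u x = a (x 2) * pd 2 u x := fun x => by
    rw [← hqa x, div_mul_cancel₀ _ (hmono x).ne']
  have hu1 : ∀ x, pd 1 u x = b (x 2) * pd 2 u x := fun x => by
    rw [← hqb x, div_mul_cancel₀ _ (hmono x).ne']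
  have e0 : pd 0 u = fun y => a (y 2) * pd 2 u y := funext hu0
  have e1 : pd 1 u = fun y => b (y 2) * pd 2 u y := funext hu1
  have hfa : ∀ x : Fin 3 → ℝ, DifferentiableAt ℝ (fun y : Fin 3 → ℝ => a (y 2)) x := fun x =>
    (ha.differentiable (by simp) (x 2)).comp x
      ((ContinuousLinearMap.proj 2 : (Fin 3 → ℝ) →L[ℝ] ℝ).differentiable.differentiableAt)
  have hfb : ∀ x : Fin 3 → ℝ, DifferentiableAt ℝ (fun y : Fin 3 → ℝ => b (y 2)) x := fun x =>
    (hb.differentiable (by simp) (x 2)).comp x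
      ((ContinuousLinearMap.proj 2 : (Fin 3 → ℝ) →L[ℝ] ℝ).differentiable.differentiableAt)
  have hD0 : ∀ (i : Fin 3) (x : Fin 3 → ℝ), pd i (pd 0 u) x
      = deriv a (x 2) * (Pi.single i 1 : Fin 3 → ℝ) 2 * pd 2 u x
        + a (x 2) * pd i (pd 2 u) x := by
    intro i x
    rw [e0, pd_mul (hfa x) (hpdd 2 x) i, pd_proj_comp (ha.differentiable (by simp)) 2 i x]
  have hD1 : ∀ (i : Fin 3) (x : Fin 3 → ℝ), pd i (pd 1 u) x
      = deriv b (x 2) * (Pi.single i 1 : Fin 3 → ℝ) 2 * pd 2 u x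
        + b (x 2) * pd i (pd 2 u) x := by
    intro i x
    rw [e1, pd_mul (hfb x) (hpdd 2 x) i, pd_proj_comp (hb.differentiable (by simp)) 2 i x]
  have hE : ∀ (i : Fin 3) (x : Fin 3 → ℝ),
      pd 0 u x * pd i (pd 0 u) x + pd 1 u x * pd i (pd 1 u) x
        + pd 2 u x * pd i (pd 2 u) x = deriv W (u x) * pd i u x := by
    intro i x
    have hF : (fun y => (1/2 : ℝ) * ((pd 0 u y)^2 + (pd 1 u y)^2 + (pd 2 u y)^2))
        = fun y => W (u y) := by
      funext y
      rw [← hequi y, Fin.sum_univ_three]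
    have h1 : pd i (fun y => (1/2 : ℝ) * ((pd 0 u y)^2 + (pd 1 u y)^2 + (pd 2 u y)^2)) x
        = pd i (fun y => W (u y)) x := by rw [hF]
    rw [pd_const_mul (f := fun y => pd 0 u y ^ 2 + pd 1 u y ^ 2 + pd 2 u y ^ 2) _ ((((hpdd 0 x).pow 2).add ((hpdd 1 x).pow 2)).add ((hpdd 2 x).pow 2)),
      pd_add (f := fun y => pd 0 u y ^ 2 + pd 1 u y ^ 2) (g := fun y => pd 2 u y ^ 2) (((hpdd 0 x).pow 2).add ((hpdd 1 x).pow 2)) ((hpdd 2 x).pow 2),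
      pd_add (f := fun y => pd 0 u y ^ 2) (g := fun y => pd 1 u y ^ 2) ((hpdd 0 x).pow 2) ((hpdd 1 x).pow 2),
      pd_sq (hpdd 0 x), pd_sq (hpdd 1 x), pd_sq (hpdd 2 x),
      pd_comp_outer (hW.differentiable (by simp) (u x)) (hud x) i] at h1
    linarith
  have hLap : ∀ x : Fin 3 → ℝ, pd 0 (pd 0 u) x + pd 1 (pd 1 u) x + pd 2 (pd 2 u) x
      = deriv W (u x) := by
    intro x
    have := hAC x
    simp only [lap, Fin.sum_univ_three] at this
    exact this
  have key : ∀ x : Fin 3 → ℝ, deriv a (x 2) = 0 ∧ deriv b (x 2) = 0 ∧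
      pd 2 (pd 2 u) x = deriv W (u x) / (a (x 2) ^ 2 + b (x 2) ^ 2 + 1) := by
    intro x
    have hS : (0:ℝ) < a (x 2) ^ 2 + b (x 2) ^ 2 + 1 := by positivity
    have h00 := hD0 0 x; have h10 := hD0 1 x; have h20 := hD0 2 x
    have h01 := hD1 0 x; have h11 := hD1 1 x; have h21 := hD1 2 x
    simp only [Pi.single_apply, Fin.ext_iff] at h00 h10 h20 h01 h11 h21
    norm_num at h00 h10 h20 h01 h11 h21
    have hE0 := hE 0 x; have hE1 := hE 1 x
    rw [h00, h01, hu0 x, hu1 x] at hE0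
    rw [h10, h11, hu0 x, hu1 x] at hE1
    -- q1 : u02 * S = w * A
    have q1 : pd 0 (pd 2 u) x * (a (x 2) ^ 2 + b (x 2) ^ 2 + 1)
        = deriv W (u x) * a (x 2) := by
      have h2 : pd 2 u x * (pd 0 (pd 2 u) x * (a (x 2) ^ 2 + b (x 2) ^ 2 + 1))
          = pd 2 u x * (deriv W (u x) * a (x 2)) := by linear_combination hE0
      exact mul_left_cancel₀ (hmono x).ne' h2
    have q2 : pd 1 (pd 2 u) x * (a (x 2) ^ 2 + b (x 2) ^ 2 + 1)
        = deriv W (u x) * b (x 2) := by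
      have h2 : pd 2 u x * (pd 1 (pd 2 u) x * (a (x 2) ^ 2 + b (x 2) ^ 2 + 1))
          = pd 2 u x * (deriv W (u x) * b (x 2)) := by linear_combination hE1
      exact mul_left_cancel₀ (hmono x).ne' h2
    have hL := hLap x
    rw [h00, h11] at hL
    have q3 : pd 2 (pd 2 u) x * (a (x 2) ^ 2 + b (x 2) ^ 2 + 1) = deriv W (u x) := by
      linear_combination (a (x 2) ^ 2 + b (x 2) ^ 2 + 1) * hL - a (x 2) * q1 - b (x 2) * q2
    have hc0 := pd_comm hu 2 0 x
    have hc1 := pd_comm hu 2 1 x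
    rw [h20] at hc0
    rw [h21] at hc1
    have qa : deriv a (x 2) * (pd 2 u x * (a (x 2) ^ 2 + b (x 2) ^ 2 + 1)) = 0 := by
      linear_combination (a (x 2) ^ 2 + b (x 2) ^ 2 + 1) * hc0 + q1 - a (x 2) * q3
    have qb : deriv b (x 2) * (pd 2 u x * (a (x 2) ^ 2 + b (x 2) ^ 2 + 1)) = 0 := by
      linear_combination (a (x 2) ^ 2 + b (x 2) ^ 2 + 1) * hc1 + q2 - b (x 2) * q3
    have hpos : (0:ℝ) < pd 2 u x * (a (x 2) ^ 2 + b (x 2) ^ 2 + 1) :=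
      mul_pos (hmono x) hS
    refine ⟨?_, ?_, ?_⟩
    · rcases mul_eq_zero.1 qa with h | h
      · exact h
      · exact absurd h hpos.ne'
    · rcases mul_eq_zero.1 qb with h | h
      · exact h
      · exact absurd h hpos.ne'
    · rw [eq_div_iff hS.ne']
      exact q3
  have hda : ∀ z, deriv a z = 0 := fun z => (key (fun _ => z)).1
  have hdb : ∀ z, deriv b z = 0 := fun z => (key (fun _ => z)).2.1
  have hac : ∀ z, a z = a 0 := fun z =>
    is_const_of_deriv_eq_zero (ha.differentiable (by simp)) hda z 0
  have hbc : ∀ z, b z = b 0 := fun z =>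
    is_const_of_deriv_eq_zero (hb.differentiable (by simp)) hdb z 0
  refine ⟨a 0, b 0, fun t => u (Pi.single 2 t), hac, hbc, ?_, ?_⟩
  · -- u x = u (Pi.single 2 (a 0 * x 0 + b 0 * x 1 + x 2))
    intro x
    set v : Fin 3 → ℝ := ![-x 0, -x 1, a 0 * x 0 + b 0 * x 1] with hvdef
    have hv0 : v 0 = -x 0 := rfl
    have hv1 : v 1 = -x 1 := rfl
    have hv2 : v 2 = a 0 * x 0 + b 0 * x 1 := rfl
    have hline : ∀ s : ℝ, HasDerivAt (fun s : ℝ => u (x + s • v)) 0 s := by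
      intro s
      have hγ : HasDerivAt (fun s : ℝ => x + s • v) v s := by
        simpa using ((hasDerivAt_id s).smul_const v).const_add x
      have h := (hud (x + s • v)).hasFDerivAt.comp_hasDerivAt s hγ
      refine h.congr_deriv ?_
      rw [clm_apply_three]
      have p0 : (fderiv ℝ u (x + s • v)) (Pi.single 0 1) = pd 0 u (x + s • v) := rfl
      have p1 : (fderiv ℝ u (x + s • v)) (Pi.single 1 1) = pd 1 u (x + s • v) := rfl
      have p2 : (fderiv ℝ u (x + s • v)) (Pi.single 2 1) = pd 2 u (x + s • v) := rfl
      rw [p0, p1, p2, hu0, hu1, hac, hbc, hv0, hv1, hv2]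
      ring
    have hφd : Differentiable ℝ (fun s : ℝ => u (x + s • v)) :=
      fun s => (hline s).differentiableAt
    have hconst := is_const_of_deriv_eq_zero hφd (fun s => (hline s).deriv) 0 1
    simp only [zero_smul, add_zero, one_smul] at hconst
    have hxv : x + v = Pi.single 2 (a 0 * x 0 + b 0 * x 1 + x 2) := by
      funext j
      fin_cases j <;>
        simp [hvdef, Pi.single_apply] <;> ring
    rw [hconst, hxv]
  · -- second derivative of h
    intro t
    have hσ : ∀ (f : (Fin 3 → ℝ) → ℝ) (hf : ∀ y, DifferentiableAt ℝ f y) (t : ℝ),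
        HasDerivAt (fun t : ℝ => f (Pi.single 2 t)) (pd 2 f (Pi.single 2 t)) t := by
      intro f hf t
      have hls : (fun t : ℝ => (Pi.single 2 t : Fin 3 → ℝ))
          = fun t : ℝ => t • (Pi.single 2 1 : Fin 3 → ℝ) := by
        funext t j
        fin_cases j <;> simp [Pi.single_apply]
      have hl : HasDerivAt (fun t : ℝ => (Pi.single 2 t : Fin 3 → ℝ))
          (Pi.single 2 1) t := by
        rw [hls]
        simpa using (hasDerivAt_id t).smul_const (Pi.single 2 1 : Fin 3 → ℝ)
      have h := (hf (Pi.single 2 t)).hasFDerivAt.comp_hasDerivAt t hl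
      exact h
    have hd1 : deriv (fun t : ℝ => u (Pi.single 2 t))
        = fun t => pd 2 u (Pi.single 2 t) :=
      funext fun t => (hσ u (fun y => hud y) t).deriv
    rw [hd1]
    have hd2 : deriv (fun t : ℝ => pd 2 u (Pi.single 2 t)) t
        = pd 2 (pd 2 u) (Pi.single 2 t) := (hσ (pd 2 u) (hpdd 2) t).deriv
    rw [hd2]
    have hk := (key (Pi.single 2 t)).2.2
    have hs2 : (Pi.single 2 t : Fin 3 → ℝ) 2 = t := by simp
    rw [hs2, hac t, hbc t] at hk
    exact hk
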